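/- For every k ∈ {1,…,6} and every integer n ≥ 1, and for every z ∈ ℂ with |z| ≤ 1 + √3 and z ≠ 1 + √3, all the denominators occurring in the composition φ_{k,n}(z) = R_{θ'_k}(f^n(R_{θ_k}(f(z)))) are nonzero and |φ_{k,n}(z)| ≤ 1 + √3; that is, each Apollonian generator φ_{k,n} maps the closed disk B̄(0, 1 + √3) (minus the pole of f) into itself. -/

import Mathlib

open Complex

/-- The Möbius map `f(z) = ((√3 − 1)z + 1)/(−z + √3 + 1)`. -/
noncomputable def apollonianF (z : ℂ) : ℂ :=
  ((Real.sqrt 3 - 1) * z + 1) / (-z + Real.sqrt 3 + 1)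

/-- The rotation `R_θ(z) = e^{iθ} z`. -/
noncomputable def rot (θ : ℝ) (z : ℂ) : ℂ := Complex.exp (θ * I) * z

/-- The angle `θ_k = (−1)^k · 2π/3`. -/
noncomputable def apollonianTheta (k : ℕ) : ℝ := (-1) ^ k * (2 * Real.pi / 3)

/-- The angle `θ'_k = 2πk/3`. -/
noncomputable def apollonianTheta' (k : ℕ) : ℝ := 2 * Real.pi * k / 3

/-- The Apollonian generator `φ_{k,n} = R_{θ'_k} ∘ f^n ∘ R_{θ_k} ∘ f`. -/
noncomputable def apollonianPhi (k n : ℕ) (z : ℂ) : ℂ :=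
  rot (apollonianTheta' k) (apollonianF^[n] (rot (apollonianTheta k) (apollonianF z)))

/-!
In the coordinate `u = (z - 1)⁻¹` the parabolic map `f` is the translation `u ↦ u - 1/√3`, and the
disk `‖z‖ ≤ 1 + √3` is the outside of the open disk of radius `1 - √3/3` about `2√3/3 - 1`.
The map `f` sends that disk onto the half-plane `re w ≥ -(√3 - 1)/4`; rotating by `θ_k`
(`cos θ_k = -1/2`) and passing to `u`, the half-plane becomes the closed disk of radius
`1 + √3/3` about `(1 + √3/3) e^{-iθ_k}`. Its translates by `-m/√3`, `m ≥ 1`, have centres at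
distance at least `2`, the sum of the radii, from `2√3/3 - 1`, so they stay in the region
`‖z‖ ≤ 1 + √3`. This bounds `φ_{k,n}` and keeps every iterate away from the pole `u = 1/√3`.
-/

namespace Complex

theorem norm_one_sub_le_norm_iff (y : ℂ) : ‖1 - y‖ ≤ ‖y‖ ↔ 1 ≤ 2 * y.re := by
  rw [← sq_le_sq₀ (norm_nonneg _) (norm_nonneg _), Complex.sq_norm, Complex.sq_norm,
    normSq_apply, normSq_apply]
  simp only [sub_re, one_re, sub_im, one_im]
  constructor <;> intro h <;> nlinarith

theorem one_le_two_mul_re_div_sub {ρ : ℝ} {z : ℂ} (hz : ‖z‖ ≤ ρ) (hzρ : z ≠ ρ) :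
    1 ≤ 2 * ((ρ : ℂ) / (ρ - z)).re := by
  have hsub : (ρ : ℂ) - z ≠ 0 := sub_ne_zero.2 hzρ.symm
  rw [← norm_one_sub_le_norm_iff, one_sub_div hsub, norm_div, norm_div, sub_sub_cancel_left,
    norm_neg, norm_real, Real.norm_of_nonneg ((norm_nonneg z).trans hz)]
  gcongr

theorem norm_inv_sub_le_norm {x c : ℂ} (hx : x ≠ 0) (h : 1 ≤ 2 * (c * x).re) :
    ‖x⁻¹ - c‖ ≤ ‖c‖ := by
  calc ‖x⁻¹ - c‖ = ‖x⁻¹‖ * ‖1 - c * x‖ := by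
        rw [← norm_mul, mul_sub, mul_one, mul_left_comm, inv_mul_cancel₀ hx, mul_one]
    _ ≤ ‖x⁻¹‖ * ‖c * x‖ := by gcongr; exact (norm_one_sub_le_norm_iff _).2 h
    _ = ‖c‖ := by
        rw [norm_mul, norm_inv, mul_left_comm, inv_mul_cancel₀ (norm_ne_zero_iff.2 hx), mul_one]

theorem norm_one_add_inv_le {ρ : ℝ} (hρ : 1 < ρ) {d : ℂ}
    (h : ρ ≤ ‖((ρ ^ 2 - 1 : ℝ) : ℂ) * d - 1‖) : ‖1 + d⁻¹‖ ≤ ρ := by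
  rcases eq_or_ne d 0 with rfl | hd
  · simpa using hρ.le
  have hρ0 : 0 ≤ ρ := by linarith
  have hsq := pow_le_pow_left₀ hρ0 h 2
  rw [Complex.sq_norm, normSq_apply] at hsq
  simp only [sub_re, mul_re, ofReal_re, ofReal_im, one_re, sub_im, mul_im, one_im] at hsq
  have hκ : 0 < ρ ^ 2 - 1 := by nlinarith
  have key : 0 ≤ (ρ ^ 2 - 1) * (d.re ^ 2 + d.im ^ 2) - 2 * d.re - 1 := by
    refine nonneg_of_mul_nonneg_right ?_ hκ
    nlinarith
  rw [← one_div, one_add_div hd, norm_div, div_le_iff₀ (norm_pos_iff.2 hd),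
    ← sq_le_sq₀ (norm_nonneg _) (by positivity), mul_pow, Complex.sq_norm, Complex.sq_norm,
    normSq_apply, normSq_apply]
  simp only [add_re, one_re, add_im, one_im]
  nlinarith

end Complex

open Complex

theorem norm_rot (θ : ℝ) (z : ℂ) : ‖rot θ z‖ = ‖z‖ := by
  rw [rot, norm_mul, norm_exp_ofReal_mul_I, one_mul]

theorem cos_apollonianTheta (k : ℕ) : Real.cos (apollonianTheta k) = -1 / 2 := by
  have h : Real.cos (2 * Real.pi / 3) = -1 / 2 := by
    rw [show 2 * Real.pi / 3 = Real.pi - Real.pi / 3 by ring, Real.cos_pi_sub,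
      Real.cos_pi_div_three]
    ring
  rcases neg_one_pow_eq_or ℝ k with hk | hk <;> simp [apollonianTheta, hk, h]

theorem sqrt_three_sq : √3 ^ 2 = 3 := Real.sq_sqrt (by norm_num)

theorem apollonianF_eq {z : ℂ} (hz : z ≠ ((1 + √3 : ℝ) : ℂ)) :
    apollonianF z = ((3 * (√3 - 1) / 2 : ℝ) : ℂ) * (((1 + √3 : ℝ) : ℂ) / ((1 + √3 : ℝ) - z))
      - (√3 - 1 : ℝ) := by
  have hsub : ((1 + √3 : ℝ) : ℂ) - z ≠ 0 := sub_ne_zero.2 hz.symm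
  have hsub' : -z + √3 + 1 ≠ 0 := by
    contrapose! hsub; push_cast; linear_combination hsub
  have hs : ((√3 : ℝ) : ℂ) ^ 2 = 3 := by exact_mod_cast sqrt_three_sq
  rw [apollonianF]
  field_simp
  push_cast
  linear_combination (z / 2 - 1 / 2 - (√3 : ℂ) / 2) * hs

theorem re_apollonianF_ge {z : ℂ} (hz : ‖z‖ ≤ 1 + √3) (hz' : z ≠ ((1 + √3 : ℝ) : ℂ)) :
    -(√3 - 1) / 4 ≤ (apollonianF z).re := by
  have hcayley := one_le_two_mul_re_div_sub hz hz'
  have hs : 1 < √3 := by nlinarith [sqrt_three_sq, Real.sqrt_nonneg 3]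
  rw [apollonianF_eq hz', sub_re, re_ofReal_mul, ofReal_re]
  nlinarith

theorem apollonianF_one_add_inv {u : ℂ} (hu : u ≠ 0) (hu' : u ≠ ((√3)⁻¹ : ℝ)) :
    apollonianF (1 + u⁻¹) = 1 + (u - ((√3)⁻¹ : ℝ))⁻¹ := by
  have hs : ((√3 : ℝ) : ℂ) ≠ 0 := ofReal_ne_zero.2 (Real.sqrt_ne_zero'.2 (by norm_num))
  have hden : (√3 : ℂ) * u - 1 ≠ 0 := by
    contrapose! hu'; push_cast; field_simp; linear_combination hu'
  have hsub : u - ((√3)⁻¹ : ℝ) = ((√3 : ℂ) * u - 1) / √3 := by push_cast; field_simp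
  have hpole : -(1 + u⁻¹) + √3 + 1 = ((√3 : ℂ) * u - 1) / u := by field_simp; ring
  rw [hsub, inv_div, apollonianF, hpole]
  field_simp
  ring

theorem apollonianF_iterate_one_add_inv {u : ℂ} (hu : ∀ m : ℕ, u ≠ ((m / √3 : ℝ) : ℂ)) (j : ℕ) :
    apollonianF^[j] (1 + u⁻¹) = 1 + (u - ((j / √3 : ℝ) : ℂ))⁻¹ := by
  induction j with
  | zero => simp
  | succ j ih =>
    have hstep : ((j + 1 : ℕ) / √3 : ℝ) = j / √3 + (√3)⁻¹ := by push_cast; ring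
    have hpole : u - ((j / √3 : ℝ) : ℂ) ≠ ((√3)⁻¹ : ℝ) := by
      rw [ne_eq, sub_eq_iff_eq_add', ← ofReal_add, ← hstep]
      exact hu (j + 1)
    rw [Function.iterate_succ_apply', ih, apollonianF_one_add_inv (sub_ne_zero.2 (hu j)) hpole,
      sub_sub, ← ofReal_add, ← hstep]

theorem exp_neg_mul_rot (θ : ℝ) (w : ℂ) : exp ((-θ : ℝ) * I) * rot θ w = w := by
  rw [rot, ← mul_assoc, ← exp_add, ofReal_neg, neg_mul, neg_add_cancel, exp_zero, one_mul]

theorem rot_ne_one {θ : ℝ} (hθ : Real.cos θ = -1 / 2) {w : ℂ} (hw : -(√3 - 1) / 4 ≤ w.re) :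
    rot θ w ≠ 1 := by
  intro h
  have hw' := exp_neg_mul_rot θ w
  rw [h, mul_one] at hw'
  rw [← hw', exp_ofReal_mul_I_re, Real.cos_neg, hθ] at hw
  nlinarith [sqrt_three_sq, Real.sqrt_nonneg 3]

theorem norm_inv_rot_sub_one_sub_le {θ : ℝ} (hθ : Real.cos θ = -1 / 2) {w : ℂ}
    (hw : -(√3 - 1) / 4 ≤ w.re) :
    ‖(rot θ w - 1)⁻¹ - ((1 + √3 / 3 : ℝ) : ℂ) * exp ((-θ : ℝ) * I)‖ ≤ 1 + √3 / 3 := by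
  have hR : 0 ≤ 1 + √3 / 3 := by positivity
  have hc : ‖((1 + √3 / 3 : ℝ) : ℂ) * exp ((-θ : ℝ) * I)‖ = 1 + √3 / 3 := by
    rw [norm_mul, norm_exp_ofReal_mul_I, mul_one, norm_real, Real.norm_of_nonneg hR]
  refine (norm_inv_sub_le_norm (sub_ne_zero.2 (rot_ne_one hθ hw)) ?_).trans_eq hc
  rw [mul_assoc, mul_sub, exp_neg_mul_rot, mul_one, re_ofReal_mul, sub_re,
    exp_ofReal_mul_I_re, Real.cos_neg, hθ]
  nlinarith [sqrt_three_sq, Real.sqrt_nonneg 3]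

theorem two_le_norm_mul_sub {ω : ℂ} (hω : ‖ω‖ = 1) (hre : ω.re = -1 / 2) {t : ℝ}
    (ht : √3 - 1 ≤ t) : 2 ≤ ‖((1 + √3 / 3 : ℝ) : ℂ) * ω - t‖ := by
  set R := 1 + √3 / 3 with hR
  have hω2 : ω.re * ω.re + ω.im * ω.im = 1 := by
    rw [← normSq_apply, ← Complex.sq_norm, hω, one_pow]
  have hs := sqrt_three_sq
  have hs2 : √3 < 2 := by nlinarith [Real.sqrt_nonneg 3]
  have hs1 : 1 < √3 := by nlinarith [Real.sqrt_nonneg 3]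
  rw [← sq_le_sq₀ (by norm_num) (norm_nonneg _), Complex.sq_norm, normSq_apply]
  simp only [sub_re, re_ofReal_mul, ofReal_re, sub_im, im_ofReal_mul, ofReal_im, sub_zero]
  have hlaw :
      (R * ω.re - t) * (R * ω.re - t) + R * ω.im * (R * ω.im) = R ^ 2 + R * t + t ^ 2 := by
    rw [hre] at hω2 ⊢
    linear_combination R ^ 2 * hω2
  rw [hlaw]
  nlinarith [mul_nonneg (sub_nonneg.2 ht) (by linarith : 0 ≤ t + √3 - 1 + R), hR]

theorem one_add_sqrt_three_le_norm {θ : ℝ} (hθ : Real.cos θ = -1 / 2) {w : ℂ}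
    (hw : -(√3 - 1) / 4 ≤ w.re) {t : ℝ} (ht : (√3)⁻¹ ≤ t) :
    1 + √3 ≤ ‖(((1 + √3) ^ 2 - 1 : ℝ) : ℂ) * ((rot θ w - 1)⁻¹ - t) - 1‖ := by
  have hs := sqrt_three_sq
  have hs0 := Real.sqrt_nonneg 3
  have hinv : (√3)⁻¹ = √3 / 3 := by field_simp; linarith
  set u := (rot θ w - 1)⁻¹
  set c := 2 * √3 / 3 - 1 with hc
  set a := ((1 + √3 / 3 : ℝ) : ℂ) * exp ((-θ : ℝ) * I)
  -- `c = (3 + 2√3)⁻¹`; the disks about `a` and `t + c` have radii `1 + √3/3` and `1 - √3/3`.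
  have hdisk : ‖a - u‖ ≤ 1 + √3 / 3 := by
    rw [norm_sub_rev]; exact norm_inv_rot_sub_one_sub_le hθ hw
  have hcenters : 2 ≤ ‖a - (t + c : ℝ)‖ :=
    two_le_norm_mul_sub (norm_exp_ofReal_mul_I _)
      (by rw [exp_ofReal_mul_I_re, Real.cos_neg, hθ]) (by rw [hc]; linarith)
  have hfar : 1 - √3 / 3 ≤ ‖u - (t + c : ℝ)‖ := by
    linarith [norm_sub_le_norm_sub_add_norm_sub a u ((t + c : ℝ) : ℂ)]
  have hscale : (((1 + √3) ^ 2 - 1 : ℝ) : ℂ) * (u - t) - 1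
      = ((3 + 2 * √3 : ℝ) : ℂ) * (u - (t + c : ℝ)) := by
    have hs' : ((√3 : ℝ) : ℂ) ^ 2 = 3 := by exact_mod_cast hs
    rw [hc]
    push_cast
    linear_combination (u - t + 4 / 3) * hs'
  rw [hscale, norm_mul, norm_real, Real.norm_of_nonneg (by positivity)]
  calc 1 + √3 = (3 + 2 * √3) * (1 - √3 / 3) := by linear_combination (2 / 3 : ℝ) * hs
    _ ≤ (3 + 2 * √3) * ‖u - (t + c : ℝ)‖ := by gcongr

theorem apollonianPhi_mapsTo_general (k n : ℕ) (hn : 1 ≤ n)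
    (z : ℂ) (hz : ‖z‖ ≤ 1 + Real.sqrt 3) (hz' : z ≠ (1 + Real.sqrt 3 : ℝ)) :
    (∀ j < n, apollonianF^[j] (rot (apollonianTheta k) (apollonianF z)) ≠
      ((1 + Real.sqrt 3 : ℝ) : ℂ)) ∧
    ‖apollonianPhi k n z‖ ≤ 1 + Real.sqrt 3 := by
  have hw := re_apollonianF_ge hz hz'
  have hθ := cos_apollonianTheta k
  set v := rot (apollonianTheta k) (apollonianF z) with hv
  set u := (v - 1)⁻¹
  have hfar (m : ℕ) (hm : 1 ≤ m) :
      1 + √3 ≤ ‖(((1 + √3) ^ 2 - 1 : ℝ) : ℂ) * (u - ((m / √3 : ℝ) : ℂ)) - 1‖ :=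
    one_add_sqrt_three_le_norm hθ hw (by rw [inv_eq_one_div]; gcongr; exact_mod_cast hm)
  have hu : ∀ m : ℕ, u ≠ ((m / √3 : ℝ) : ℂ) := by
    rintro (_ | m) h
    · simp only [u, CharP.cast_eq_zero, zero_div, ofReal_zero, inv_eq_zero, sub_eq_zero] at h
      exact rot_ne_one hθ hw h
    · have := hfar (m + 1) (by omega)
      rw [h, sub_self, mul_zero, zero_sub, norm_neg, norm_one] at this
      linarith [Real.sqrt_pos.2 (by norm_num : (0 : ℝ) < 3)]
  have hvu : v = 1 + u⁻¹ := by rw [inv_inv, add_sub_cancel]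
  refine ⟨fun j _ hpole => hu (j + 1) ?_, ?_⟩
  · rw [hvu, apollonianF_iterate_one_add_inv hu, ofReal_add, ofReal_one, add_right_inj,
      inv_eq_iff_eq_inv, sub_eq_iff_eq_add] at hpole
    rw [hpole]; push_cast; ring
  · rw [apollonianPhi, ← hv, hvu, apollonianF_iterate_one_add_inv hu, norm_rot]
    exact norm_one_add_inv_le (by linarith [Real.sqrt_pos.2 (by norm_num : (0 : ℝ) < 3)])
      (hfar n hn)

/-- For `k ∈ {1,…,6}`, `n ≥ 1` and `|z| ≤ 1 + √3`, `z ≠ 1 + √3`: no intermediate point of the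
composition hits the pole `1 + √3` of `f` (so all denominators are nonzero), and
`|φ_{k,n}(z)| ≤ 1 + √3`. -/
theorem apollonianPhi_mapsTo (k n : ℕ) (hk1 : 1 ≤ k) (hk6 : k ≤ 6) (hn : 1 ≤ n)
    (z : ℂ) (hz : ‖z‖ ≤ 1 + Real.sqrt 3) (hz' : z ≠ (1 + Real.sqrt 3 : ℝ)) :
    (∀ j < n, apollonianF^[j] (rot (apollonianTheta k) (apollonianF z)) ≠
      ((1 + Real.sqrt 3 : ℝ) : ℂ)) ∧
    ‖apollonianPhi k n z‖ ≤ 1 + Real.sqrt 3 :=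
  apollonianPhi_mapsTo_general k n hn z hz hz'
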